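/- Combinatorial mutation is involutive: if Q = mut_w(P,F), then P = mut_{(−w)}(Q,F). -/

import Mathlib

open Set Pointwise

noncomputable section

/-- the real vector space `N_ℝ = N ⊗ ℝ` for the lattice `N ≅ ℤᵈ` -/
abbrev RVec (d : ℕ) := Fin d → ℝ

/-- the inclusion of the lattice `N = ℤᵈ` into `N_ℝ` -/
def toR {d : ℕ} (u : Fin d → ℤ) : RVec d := fun i => (u i : ℝ)

/-- the pairing `⟨w, u⟩` of `w ∈ M = Hom(N, ℤ)` with `u ∈ N_ℝ` -/
def pairR {d : ℕ} (w : Fin d → ℤ) (u : RVec d) : ℝ := ∑ i, (w i : ℝ) * u i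

/-- `P` is a lattice polytope: the convex hull of finitely many lattice points. -/
def IsLatticePolytope {d : ℕ} (P : Set (RVec d)) : Prop :=
  ∃ S : Finset (Fin d → ℤ), S.Nonempty ∧ P = convexHull ℝ (toR '' ↑S)

/-- `w ∈ M ≅ ℤᵈ` is a primitive lattice vector -/
def IsPrimitive {d : ℕ} (w : Fin d → ℤ) : Prop := Finset.univ.gcd w = 1

/-- `w_h(P)`: the convex hull of the lattice points of `P` at height `h` with
respect to `w` -/
def heightSlice {d : ℕ} (w : Fin d → ℤ) (h : ℤ) (P : Set (RVec d)) : Set (RVec d) :=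
  convexHull ℝ (toR '' {u : Fin d → ℤ | toR u ∈ P ∧ pairR w (toR u) = (h : ℝ)})

/-- `F` is a lattice polytope lying at height `0` with respect to `w`
(a candidate factor of a polytope with respect to `w`). -/
def IsFactorShape {d : ℕ} (w : Fin d → ℤ) (F : Set (RVec d)) : Prop :=
  IsLatticePolytope F ∧ ∀ x ∈ F, pairR w x = 0

/-- The family `G` witnesses that `F` is a factor of `P` with respect to `w`:
for every negative height `h`, `G h` is a possibly empty lattice polytope satisfying
the sandwich condition `{u ∈ 𝒱(P) : ⟨w,u⟩ = h} ⊆ G h + (−h)·F ⊆ w_h(P)`,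
where `𝒱(P)` is the set of vertices (extreme points) of `P`, `+` is the Minkowski
sum (with `Q + ∅ = ∅`), and `(−h)·F` is the `(−h)`-fold Minkowski sum of `F`. -/
def IsMutationWitness {d : ℕ} (w : Fin d → ℤ) (F : Set (RVec d))
    (G : ℤ → Set (RVec d)) (P : Set (RVec d)) : Prop :=
  ∀ h : ℤ, h < 0 →
    (G h = ∅ ∨ IsLatticePolytope (G h)) ∧
    {x | x ∈ Set.extremePoints ℝ P ∧ pairR w x = (h : ℝ)} ⊆ G h + (-h : ℝ) • F ∧
    G h + (-h : ℝ) • F ⊆ heightSlice w h P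

/-- the combinatorial mutation `mut_w(P, F)` of `P` given by the vector `w`, the
factor `F` and the polytopes `{G_h}`:
`mut_w(P,F) = conv( ⋃_{h<0} G_h ∪ ⋃_{h≥0} (w_h(P) + h·F) )` -/
def mutation {d : ℕ} (w : Fin d → ℤ) (F : Set (RVec d)) (G : ℤ → Set (RVec d))
    (P : Set (RVec d)) : Set (RVec d) :=
  convexHull ℝ ((⋃ (h : ℤ) (_ : h < 0), G h) ∪
    ⋃ h : ℕ, (heightSlice w (h : ℤ) P + (h : ℝ) • F))

/-!
Every generator `x` of `Q = mut_w(P,F)` satisfies `x + s•F ⊆ P + t•F` for some `s, t ≥ 0` with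
`⟨w,x⟩ = t - s`, and these points form a convex set, so the same holds on all of `Q`.
Cancelling `F` (Minkowski cancellation against the closed convex set `P + t•F`) gives
`x + max(-⟨w,x⟩,0)•F ⊆ P + max(⟨w,x⟩,0)•F` for every `x ∈ Q`. Hence the slices of `Q` at heights
`k ≥ 0` lie in `P + k•F`, the slices at height `-k` thickened by `k•F` lie in `P`, and the
polytopes `G'_h` of any `(-w)`-witness for `Q` lie in `P`; so `mut_{-w}(Q,F) ⊆ P`.

The family `h ↦ w_{-h}(P)` is a `(-w)`-witness for `Q`, since the vertices of `Q` at height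
`k ≥ 0` come from the pieces `w_k(P) + k•F`. For `P ⊆ mut_{-w}(Q,F)` it suffices to treat a vertex
`v` of `P` at height `k`. If `k < 0`, then `v ∈ G_k + (-k)•F ⊆ w_k(Q) + (-k)•F`; if `k = 0`, then
`v ∈ w_0(Q)`. If `k > 0`, tilt a functional `ℓ` exposing `v` in `P` to `ℓ - (max_F ℓ)•w`: it is
maximised over `Q` at a vertex `g + k•f` of `Q` at height `k` with `g ∈ G'_{-k} ⊆ P`, and
maximality forces `g = v`.
-/

section ConvexGeometry

variable {E : Type*} [AddCommGroup E] [Module ℝ E] [TopologicalSpace E]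
  [IsTopologicalAddGroup E] [ContinuousSMul ℝ E] [LocallyConvexSpace ℝ E]

theorem subset_of_add_subset_add {A B C : Set E} (hB : Convex ℝ B) (hBc : IsClosed B)
    (hC : IsCompact C) (hCne : C.Nonempty) (h : A + C ⊆ B + C) : A ⊆ B := by
  intro a ha
  by_contra haB
  obtain ⟨l, u, hlB, hu⟩ := geometric_hahn_banach_closed_point hB hBc haB
  obtain ⟨c, hc, hcmax⟩ := hC.exists_isMaxOn hCne l.continuous.continuousOn
  obtain ⟨b, hb, c', hc', hbc⟩ := h (add_mem_add ha hc)
  have hsum : l b + l c' = l a + l c := by rw [← map_add, ← map_add]; exact congrArg l hbc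
  linarith [hlB b hb, show l c' ≤ l c from hcmax hc']

theorem exists_mem_extremePoints_isMaxOn [T2Space E] {s : Set E} (hs : IsCompact s)
    (hne : s.Nonempty) (l : StrongDual ℝ E) : ∃ e ∈ extremePoints ℝ s, IsMaxOn l s e := by
  obtain ⟨z, hz, hzmax⟩ := hs.exists_isMaxOn hne l.continuous.continuousOn
  have hexp : IsExposed ℝ s (l.toExposed s) := ContinuousLinearMap.toExposed.isExposed
  obtain ⟨e, he⟩ := (hexp.isCompact hs).extremePoints_nonempty ⟨z, hz, hzmax⟩
  exact ⟨e, hexp.isExtreme.extremePoints_subset_extremePoints he, (extremePoints_subset he).2⟩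

theorem Set.Finite.extremePoints_convexHull_subset_exposedPoints [T2Space E] {X : Set E}
    (hX : X.Finite) : extremePoints ℝ (convexHull ℝ X) ⊆ exposedPoints ℝ (convexHull ℝ X) := by
  intro v hv
  have hvX : v ∈ X := extremePoints_convexHull_subset hv
  have hvK : v ∉ convexHull ℝ (X \ {v}) := fun hvK =>
    (extremePoints_convexHull_subset (inter_extremePoints_subset_extremePoints_of_subset
      (convexHull_mono sdiff_subset) ⟨hvK, hv⟩)).2 rfl
  obtain ⟨l, u, hlK, hu⟩ := geometric_hahn_banach_closed_point (convex_convexHull ℝ _)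
    (hX.sdiff.isCompact_convexHull ℝ).isClosed hvK
  have hseg : ∀ z ∈ convexHull ℝ (X \ {v}), ∀ y ∈ segment ℝ v z,
      l y ≤ l v ∧ (l v ≤ l y → y = v) := by
    rintro z hz _ ⟨a, b, ha, hb, hab, rfl⟩
    obtain rfl : a = 1 - b := by linarith
    have hgap : 0 < l v - l z := sub_pos.2 ((hlK z hz).trans hu)
    simp only [map_add, map_smul, smul_eq_mul]
    refine ⟨by nlinarith, fun hle => ?_⟩
    obtain rfl : b = 0 := by nlinarith
    simp
  refine ⟨extremePoints_subset hv, l, fun y hy => ?_⟩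
  rcases (X \ {v}).eq_empty_or_nonempty with hE | hne
  · rw [sdiff_eq_empty, subset_singleton_iff_eq] at hE
    rcases hE with rfl | rfl
    · simp at hvX
    · obtain rfl : y = v := by simpa using hy
      exact ⟨le_rfl, fun _ => rfl⟩
  · rw [← insert_eq_of_mem hvX, ← insert_sdiff_singleton, convexHull_insert hne,
      mem_convexJoin] at hy
    obtain ⟨_, rfl, z, hz, hy⟩ := hy
    exact hseg z hz y hy

end ConvexGeometry

theorem convexHull_iUnion_convexHull {𝕜 E ι : Type*} [Field 𝕜] [LinearOrder 𝕜]
    [IsStrictOrderedRing 𝕜] [AddCommGroup E] [Module 𝕜 E] (B : ι → Set E) :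
    convexHull 𝕜 (⋃ i, convexHull 𝕜 (B i)) = convexHull 𝕜 (⋃ i, B i) :=
  (convexHull_min (iUnion_subset fun i => convexHull_mono (subset_iUnion B i))
    (convex_convexHull 𝕜 _)).antisymm
    (convexHull_mono (iUnion_mono fun _ => subset_convexHull 𝕜 _))

theorem isCompact_convexHull_union_iUnion_convexHull {E ι κ : Type*} [AddCommGroup E]
    [Module ℝ E] [TopologicalSpace E] [IsTopologicalAddGroup E] [ContinuousSMul ℝ E]
    {B₁ : ι → Set E} {B₂ : κ → Set E} (h₁ : ∀ i, (B₁ i).Finite) (h₂ : ∀ j, (B₂ j).Finite)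
    (hs₁ : {i | (B₁ i).Nonempty}.Finite) (hs₂ : {j | (B₂ j).Nonempty}.Finite) :
    IsCompact (convexHull ℝ ((⋃ i, convexHull ℝ (B₁ i)) ∪ ⋃ j, convexHull ℝ (B₂ j))) := by
  rw [← convexHull_convexHull_union_left, convexHull_iUnion_convexHull,
    convexHull_convexHull_union_left, ← convexHull_convexHull_union_right,
    convexHull_iUnion_convexHull, convexHull_convexHull_union_right]
  exact ((hs₁.iUnion (fun i _ => h₁ i) fun _ hi => not_nonempty_iff_eq_empty.1 hi).union
    (hs₂.iUnion (fun j _ => h₂ j) fun _ hj => not_nonempty_iff_eq_empty.1 hj)).isCompact_convexHull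
    ℝ

section Lattice

variable {d : ℕ}

lemma finite_latticePoints {X : Set (RVec d)} (hX : Bornology.IsBounded X) :
    {u : Fin d → ℤ | toR u ∈ X}.Finite :=
  (Metric.isCompact_of_isClosed_isBounded (isClosed_discrete _)
    ((Real.isometry_intCast.postcomp_pi (α := Fin d)).antilipschitz.isBounded_preimage
      hX)).finite_of_discrete

lemma toR_add_zsmul (u t : Fin d → ℤ) (k : ℤ) : toR (u + k • t) = toR u + (k : ℝ) • toR t := by
  ext i; simp [toR]

def pairL (w : Fin d → ℤ) : StrongDual ℝ (RVec d) := ∑ i, (w i : ℝ) • ContinuousLinearMap.proj i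

lemma pairL_apply (w : Fin d → ℤ) (x : RVec d) : pairL w x = pairR w x := by
  simp [pairL, pairR]

lemma pairR_add (w : Fin d → ℤ) (x y : RVec d) : pairR w (x + y) = pairR w x + pairR w y := by
  simp only [← pairL_apply, map_add]

lemma pairR_smul (w : Fin d → ℤ) (c : ℝ) (x : RVec d) : pairR w (c • x) = c * pairR w x := by
  simp only [← pairL_apply, map_smul, smul_eq_mul]

lemma pairR_neg_left (w : Fin d → ℤ) (x : RVec d) : pairR (-w) x = -pairR w x := by
  simp [pairR, Finset.sum_neg_distrib]

lemma pairR_toR (w u : Fin d → ℤ) : pairR w (toR u) = ((∑ i, w i * u i : ℤ) : ℝ) := by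
  simp [pairR, toR]

lemma pairR_add_smul_of_mem {w : Fin d → ℤ} {F : Set (RVec d)} (hF : ∀ f ∈ F, pairR w f = 0)
    {f : RVec d} (hf : f ∈ F) (x : RVec d) (c : ℝ) : pairR w (x + c • f) = pairR w x := by
  rw [pairR_add, pairR_smul, hF f hf, mul_zero, add_zero]

lemma IsLatticePolytope.convex {P : Set (RVec d)} (hP : IsLatticePolytope P) : Convex ℝ P := by
  obtain ⟨S, -, rfl⟩ := hP
  exact convex_convexHull ℝ _

lemma IsLatticePolytope.isCompact {P : Set (RVec d)} (hP : IsLatticePolytope P) :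
    IsCompact P := by
  obtain ⟨S, -, rfl⟩ := hP
  exact (S.finite_toSet.image _).isCompact_convexHull ℝ

lemma IsLatticePolytope.nonempty {P : Set (RVec d)} (hP : IsLatticePolytope P) : P.Nonempty := by
  obtain ⟨S, hS, rfl⟩ := hP
  exact ((Finset.coe_nonempty.2 hS).image _).convexHull

section HeightSlice

variable {w : Fin d → ℤ} {h : ℤ} {X : Set (RVec d)}

lemma mem_heightSlice_of_toR {u : Fin d → ℤ} (hu : toR u ∈ X) (huh : pairR w (toR u) = h) :
    toR u ∈ heightSlice w h X :=
  subset_convexHull ℝ _ ⟨u, ⟨hu, huh⟩, rfl⟩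

lemma heightSlice_subset (hX : Convex ℝ X) : heightSlice w h X ⊆ X :=
  convexHull_min (by rintro _ ⟨u, ⟨hu, -⟩, rfl⟩; exact hu) hX

lemma pairR_of_mem_heightSlice {x : RVec d} (hx : x ∈ heightSlice w h X) : pairR w x = h := by
  have hconv : Convex ℝ {x : RVec d | pairR w x = h} := by
    simpa only [ContinuousLinearMap.coe_coe, pairL_apply] using
      convex_hyperplane (pairL w).toLinearMap.isLinear (h : ℝ)
  exact convexHull_min (by rintro _ ⟨u, ⟨-, hu⟩, rfl⟩; exact hu) hconv hx

lemma heightSlice_neg_left : heightSlice (-w) h X = heightSlice w (-h) X := by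
  simp only [heightSlice, pairR_neg_left, Int.cast_neg, neg_eq_iff_eq_neg]

lemma heightSlice_eq_empty_or_isLatticePolytope (hX : Bornology.IsBounded X) :
    heightSlice w h X = ∅ ∨ IsLatticePolytope (heightSlice w h X) := by
  set L := {u : Fin d → ℤ | toR u ∈ X ∧ pairR w (toR u) = h}
  have hL : L.Finite := (finite_latticePoints hX).subset fun _ hu => hu.1
  rcases L.eq_empty_or_nonempty with hE | hne
  · left
    simp [heightSlice, L, hE]
  · exact Or.inr ⟨hL.toFinset, by simpa using hne, by simp [heightSlice, L]⟩

lemma finite_setOf_heightSlice_nonempty (hX : Bornology.IsBounded X) :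
    {h : ℤ | (heightSlice w h X).Nonempty}.Finite := by
  refine ((finite_latticePoints hX).image fun u => ∑ i, w i * u i).subset ?_
  rintro h ⟨_, hx⟩
  obtain ⟨_, ⟨u, ⟨hu, huh⟩, rfl⟩⟩ := convexHull_nonempty_iff.1 ⟨_, hx⟩
  exact ⟨u, hu, by rw [pairR_toR] at huh; exact_mod_cast huh⟩

end HeightSlice

section Mutation

variable {w : Fin d → ℤ} {F : Set (RVec d)} {G : ℤ → Set (RVec d)} {P : Set (RVec d)}

lemma convex_mutation : Convex ℝ (mutation w F G P) := convex_convexHull ℝ _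

lemma subset_mutation_of_neg {h : ℤ} (hh : h < 0) : G h ⊆ mutation w F G P :=
  fun _ hx => subset_convexHull ℝ _ (Or.inl (mem_iUnion₂.2 ⟨h, hh, hx⟩))

lemma heightSlice_add_smul_subset_mutation {k : ℤ} (hk : 0 ≤ k) :
    heightSlice w k P + (k : ℝ) • F ⊆ mutation w F G P := by
  lift k to ℕ using hk
  exact fun _ hx => subset_convexHull ℝ _ (Or.inr (mem_iUnion.2 ⟨k, by exact_mod_cast hx⟩))

lemma heightSlice_zero_subset_mutation (hF : F.Nonempty) :
    heightSlice w 0 P ⊆ mutation w F G P := by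
  simpa [zero_smul_set hF] using heightSlice_add_smul_subset_mutation (G := G) (w := w)
    (P := P) (F := F) le_rfl

lemma mutation_subset {S : Set (RVec d)} (hS : Convex ℝ S) (hneg : ∀ h < 0, G h ⊆ S)
    (hnat : ∀ m : ℕ, heightSlice w m P + (m : ℝ) • F ⊆ S) : mutation w F G P ⊆ S :=
  convexHull_min (union_subset (iUnion₂_subset hneg) (iUnion_subset hnat)) hS

lemma forall_mem_extremePoints_mutation {p : RVec d → Prop} (hneg : ∀ h < 0, ∀ y ∈ G h, p y)
    (hnat : ∀ m : ℕ, ∀ y ∈ heightSlice w m P + (m : ℝ) • F, p y) :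
    ∀ e ∈ extremePoints ℝ (mutation w F G P), p e := fun _ he =>
  union_subset (iUnion₂_subset hneg) (iUnion_subset hnat) (extremePoints_convexHull_subset he)

lemma pairR_of_mem_witness (hF0 : ∀ f ∈ F, pairR w f = 0) (hF : F.Nonempty) {h : ℤ}
    (hG : G h + (-h : ℝ) • F ⊆ heightSlice w h P) {y : RVec d} (hy : y ∈ G h) :
    pairR w y = h := by
  obtain ⟨f, hf⟩ := hF
  rw [← pairR_of_mem_heightSlice (hG (add_mem_add hy (smul_mem_smul_set hf))),
    pairR_add_smul_of_mem hF0 hf]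

lemma pairR_of_mem_heightSlice_add_smul (hF0 : ∀ f ∈ F, pairR w f = 0) {k : ℤ} {c : ℝ}
    {y : RVec d} (hy : y ∈ heightSlice w k P + c • F) : pairR w y = k := by
  obtain ⟨p, hp, _, ⟨f, hf, rfl⟩, rfl⟩ := hy
  rw [pairR_add_smul_of_mem hF0 hf, pairR_of_mem_heightSlice hp]

lemma exists_finite_convexHull_eq_iUnion (hG : IsMutationWitness w F G P) (h : ℤ) :
    ∃ X : Set (RVec d), X.Finite ∧ convexHull ℝ X = ⋃ (_ : h < 0), G h := by
  by_cases hh : h < 0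
  · rcases (hG h hh).1 with hE | ⟨S, -, hS⟩
    · exact ⟨∅, finite_empty, by simp [hh, hE]⟩
    · exact ⟨_, S.finite_toSet.image toR, by simp [hh, hS]⟩
  · exact ⟨∅, finite_empty, by simp [hh]⟩

lemma isCompact_mutation (hP : Bornology.IsBounded P) (hF : IsLatticePolytope F)
    (hG : IsMutationWitness w F G P) : IsCompact (mutation w F G P) := by
  obtain ⟨f, hf⟩ := hF.nonempty
  obtain ⟨T, -, rfl⟩ := hF
  have hH := finite_setOf_heightSlice_nonempty (w := w) hP
  choose B hBfin hB using exists_finite_convexHull_eq_iUnion hG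
  set L : ℕ → Set (RVec d) := fun m =>
    toR '' {u | toR u ∈ P ∧ pairR w (toR u) = ((m : ℤ) : ℝ)} + (m : ℝ) • toR '' (T : Set _)
  have hL : ∀ m : ℕ, convexHull ℝ (L m) =
      heightSlice w m P + (m : ℝ) • convexHull ℝ (toR '' (T : Set (Fin d → ℤ))) := fun m => by
    rw [convexHull_add, convexHull_smul]; rfl
  have hQ : mutation w (convexHull ℝ (toR '' (T : Set (Fin d → ℤ)))) G P =
      convexHull ℝ ((⋃ h, convexHull ℝ (B h)) ∪ ⋃ m, convexHull ℝ (L m)) := by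
    simp only [hB, hL]
    rfl
  rw [hQ]
  refine isCompact_convexHull_union_iUnion_convexHull hBfin
    (fun m => (((finite_latticePoints hP).subset fun _ hu => hu.1).image _).add
      (T.finite_toSet.image _).smul_set) (hH.subset fun h hne => ?_)
    ((hH.preimage Nat.cast_injective.injOn).subset fun m hne => ?_)
  · obtain ⟨y, hy⟩ := hne.convexHull (𝕜 := ℝ)
    rw [hB h] at hy
    obtain ⟨hh, hy⟩ := mem_iUnion.1 hy
    exact ⟨_, (hG h hh).2.2 (add_mem_add hy (smul_mem_smul_set hf))⟩
  · have hne' := hne.convexHull (𝕜 := ℝ)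
    rw [hL m] at hne'
    exact hne'.of_add_left

end Mutation

section ShiftRegion

variable {w : Fin d → ℤ} {F P : Set (RVec d)}

def shiftRegion (w : Fin d → ℤ) (F P : Set (RVec d)) : Set (RVec d) :=
  {x | ∃ s t : ℝ, 0 ≤ s ∧ 0 ≤ t ∧ pairR w x = t - s ∧ {x} + s • F ⊆ P + t • F}

lemma convex_shiftRegion (hP : Convex ℝ P) (hF : Convex ℝ F) : Convex ℝ (shiftRegion w F P) := by
  rintro x ⟨s, t, hs, ht, hx, hxF⟩ y ⟨s', t', hs', ht', hy, hyF⟩ a b ha hb hab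
  refine ⟨a * s + b * s', a * t + b * t', by positivity, by positivity, ?_, ?_⟩
  · rw [pairR_add, pairR_smul, pairR_smul, hx, hy]; ring
  calc {a • x + b • y} + (a * s + b * s') • F = a • ({x} + s • F) + b • ({y} + s' • F) := by
        rw [hF.add_smul (by positivity) (by positivity), smul_add, smul_add, smul_smul, smul_smul,
          smul_set_singleton, smul_set_singleton, ← singleton_add_singleton]
        abel
    _ ⊆ a • (P + t • F) + b • (P + t' • F) :=
        add_subset_add (smul_set_mono hxF) (smul_set_mono hyF)
    _ = P + (a * t + b * t') • F := by
        rw [hF.add_smul (by positivity) (by positivity), smul_add, smul_add, smul_smul, smul_smul,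
          add_add_add_comm, ← hP.add_smul ha hb, hab, one_smul]

lemma add_smul_subset_of_mem_shiftRegion (hP : IsCompact P) (hPc : Convex ℝ P) (hF : IsCompact F)
    (hFc : Convex ℝ F) (hFne : F.Nonempty) {x : RVec d} (hx : x ∈ shiftRegion w F P) {s t : ℝ}
    (hs : 0 ≤ s) (ht : 0 ≤ t) (hst : pairR w x = t - s) : {x} + s • F ⊆ P + t • F := by
  obtain ⟨s₀, t₀, hs₀, ht₀, hx₀, hsub⟩ := hx
  rcases le_total s s₀ with h | h
  · refine subset_of_add_subset_add (hPc.add (hFc.smul t)) (hP.add (hF.smul t)).isClosed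
      (hF.smul (s₀ - s)) (hFne.smul_set) ?_
    rwa [add_assoc, add_assoc, ← hFc.add_smul hs (by linarith), ← hFc.add_smul ht (by linarith),
      add_sub_cancel, show t + (s₀ - s) = t₀ by linarith]
  · calc {x} + s • F = {x} + s₀ • F + (s - s₀) • F := by
          rw [add_assoc, ← hFc.add_smul hs₀ (by linarith), add_sub_cancel]
      _ ⊆ P + t₀ • F + (s - s₀) • F := add_subset_add_right hsub
      _ = P + t • F := by
          rw [add_assoc, ← hFc.add_smul ht₀ (by linarith), show t₀ + (s - s₀) = t by linarith]

lemma mutation_subset_shiftRegion {G : ℤ → Set (RVec d)} (hP : Convex ℝ P) (hFc : Convex ℝ F)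
    (hF0 : ∀ f ∈ F, pairR w f = 0) (hFne : F.Nonempty)
    (hG : ∀ h < 0, G h + (-h : ℝ) • F ⊆ heightSlice w h P) :
    mutation w F G P ⊆ shiftRegion w F P := by
  refine mutation_subset (convex_shiftRegion hP hFc) (fun h hh y hy => ?_) fun m y hy => ?_
  · refine ⟨-h, 0, by simp [hh.le], le_rfl,
      by rw [pairR_of_mem_witness hF0 hFne (hG h hh) hy]; ring, ?_⟩
    rw [zero_smul_set hFne, add_zero]
    exact (add_subset_add_right (singleton_subset_iff.2 hy)).trans
      ((hG h hh).trans (heightSlice_subset hP))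
  · refine ⟨0, m, le_rfl, by positivity, by rw [pairR_of_mem_heightSlice_add_smul hF0 hy]; simp, ?_⟩
    rw [zero_smul_set hFne, add_zero, singleton_subset_iff]
    exact add_subset_add_right (heightSlice_subset hP) hy

end ShiftRegion

section Involution

variable {w : Fin d → ℤ} {F : Set (RVec d)} {G G' : ℤ → Set (RVec d)} {P : Set (RVec d)}

lemma add_smul_subset_of_mem_mutation (hP : IsLatticePolytope P) (hF : IsFactorShape w F)
    (hG : IsMutationWitness w F G P) {x : RVec d} (hx : x ∈ mutation w F G P) {s t : ℝ}
    (hs : 0 ≤ s) (ht : 0 ≤ t) (hst : pairR w x = t - s) : {x} + s • F ⊆ P + t • F :=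
  add_smul_subset_of_mem_shiftRegion hP.isCompact hP.convex hF.1.isCompact hF.1.convex
    hF.1.nonempty (mutation_subset_shiftRegion hP.convex hF.1.convex hF.2 hF.1.nonempty
      (fun h hh => (hG h hh).2.2) hx) hs ht hst

lemma heightSlice_mutation_subset_add_smul (hP : IsLatticePolytope P) (hF : IsFactorShape w F)
    (hG : IsMutationWitness w F G P) {k : ℤ} (hk : 0 ≤ k) :
    heightSlice w k (mutation w F G P) ⊆ P + (k : ℝ) • F := fun x hx => by
  have hsub := add_smul_subset_of_mem_mutation hP hF hG (heightSlice_subset convex_mutation hx)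
    le_rfl (Int.cast_nonneg hk) (by rw [pairR_of_mem_heightSlice hx, sub_zero])
  rw [zero_smul_set hF.1.nonempty, add_zero, singleton_subset_iff] at hsub
  exact hsub

lemma heightSlice_mutation_add_smul_subset (hP : IsLatticePolytope P) (hF : IsFactorShape w F)
    (hG : IsMutationWitness w F G P) {k : ℤ} (hk : 0 ≤ k) :
    heightSlice w (-k) (mutation w F G P) + (k : ℝ) • F ⊆ P := by
  rintro _ ⟨x, hx, f, hf, rfl⟩
  have hsub := add_smul_subset_of_mem_mutation hP hF hG (heightSlice_subset convex_mutation hx)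
    (Int.cast_nonneg hk) le_rfl (by rw [pairR_of_mem_heightSlice hx]; push_cast; ring)
  rw [zero_smul_set hF.1.nonempty, add_zero] at hsub
  exact hsub (add_mem_add rfl hf)

lemma heightSlice_add_smul_subset_heightSlice_mutation (hF : IsFactorShape w F) {k : ℤ}
    (hk : 0 ≤ k) :
    heightSlice w k P + (k : ℝ) • F ⊆ heightSlice w k (mutation w F G P) := by
  obtain ⟨⟨T, -, hT⟩, hF0⟩ := hF
  rw [heightSlice, hT, ← convexHull_smul, ← convexHull_add, ← hT]
  refine convexHull_min ?_ (convex_convexHull ℝ _)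
  rintro _ ⟨_, ⟨u, hu, rfl⟩, _, ⟨_, ⟨t, ht, rfl⟩, rfl⟩, rfl⟩
  have hmem : toR (u + k • t) ∈ heightSlice w k P + (k : ℝ) • F := by
    rw [toR_add_zsmul]
    exact add_mem_add (mem_heightSlice_of_toR hu.1 hu.2)
      (smul_mem_smul_set (hT ▸ subset_convexHull ℝ _ ⟨t, ht, rfl⟩))
  show toR u + (k : ℝ) • toR t ∈ _
  rw [← toR_add_zsmul]
  exact mem_heightSlice_of_toR (heightSlice_add_smul_subset_mutation hk hmem)
    (pairR_of_mem_heightSlice_add_smul hF0 hmem)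

lemma subset_heightSlice_mutation_of_neg (hF : IsFactorShape w F)
    (hG : IsMutationWitness w F G P) {h : ℤ} (hh : h < 0) :
    G h ⊆ heightSlice w h (mutation w F G P) := by
  rcases (hG h hh).1 with hE | ⟨T, -, hT⟩
  · simp [hE]
  rw [hT]
  refine convexHull_min ?_ (convex_convexHull ℝ _)
  rintro _ ⟨t, ht, rfl⟩
  have htG : toR t ∈ G h := hT ▸ subset_convexHull ℝ _ ⟨t, ht, rfl⟩
  exact mem_heightSlice_of_toR (subset_mutation_of_neg hh htG)
    (pairR_of_mem_witness hF.2 hF.1.nonempty (hG h hh).2.2 htG)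

lemma mem_heightSlice_add_smul_of_mem_extremePoints (hF : IsFactorShape w F)
    (hG : IsMutationWitness w F G P) {k : ℤ} (hk : 0 ≤ k) {e : RVec d}
    (he : e ∈ extremePoints ℝ (mutation w F G P)) (hek : pairR w e = k) :
    e ∈ heightSlice w k P + (k : ℝ) • F := by
  refine forall_mem_extremePoints_mutation
    (p := fun y => pairR w y = k → y ∈ heightSlice w k P + (k : ℝ) • F)
    (fun h hh y hy hyk => ?_) (fun m y hy hyk => ?_) e he hek
  · rw [pairR_of_mem_witness hF.2 hF.1.nonempty (hG h hh).2.2 hy] at hyk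
    exact absurd (show h = k by exact_mod_cast hyk) (by omega)
  · rw [pairR_of_mem_heightSlice_add_smul hF.2 hy] at hyk
    obtain rfl : (m : ℤ) = k := by exact_mod_cast hyk
    simpa using hy

lemma isMutationWitness_neg (hP : IsLatticePolytope P) (hF : IsFactorShape w F)
    (hG : IsMutationWitness w F G P) :
    IsMutationWitness (-w) F (fun h => heightSlice w (-h) P) (mutation w F G P) := by
  intro h hh
  refine ⟨heightSlice_eq_empty_or_isLatticePolytope hP.isCompact.isBounded,
    fun x ⟨hx, hxh⟩ => ?_, ?_⟩
  · have := mem_heightSlice_add_smul_of_mem_extremePoints hF hG (k := -h) (by omega) hx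
      (by rw [pairR_neg_left] at hxh; push_cast; linarith)
    simpa using this
  · rw [heightSlice_neg_left]
    simpa using heightSlice_add_smul_subset_heightSlice_mutation (G := G) hF (k := -h) (by omega)

lemma subset_of_isMutationWitness_neg (hP : IsLatticePolytope P) (hF : IsFactorShape w F)
    (hG : IsMutationWitness w F G P) (hG' : IsMutationWitness (-w) F G' (mutation w F G P))
    {h : ℤ} (hh : h < 0) : G' h ⊆ P := by
  refine subset_of_add_subset_add hP.convex hP.isCompact.isClosed (hF.1.isCompact.smul (-h : ℝ))
    hF.1.nonempty.smul_set ((hG' h hh).2.2.trans ?_)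
  rw [heightSlice_neg_left]
  simpa using heightSlice_mutation_subset_add_smul hP hF hG (k := -h) (by omega)

lemma mutation_neg_subset (hP : IsLatticePolytope P) (hF : IsFactorShape w F)
    (hG : IsMutationWitness w F G P) (hG' : IsMutationWitness (-w) F G' (mutation w F G P)) :
    mutation (-w) F G' (mutation w F G P) ⊆ P :=
  mutation_subset hP.convex (fun _ hh => subset_of_isMutationWitness_neg hP hF hG hG' hh)
    fun m => by
      rw [heightSlice_neg_left]
      exact_mod_cast heightSlice_mutation_add_smul_subset hP hF hG (Int.natCast_nonneg m)

lemma pairR_eq_of_le_tilt (hP : IsLatticePolytope P) (hF : IsFactorShape w F)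
    (hG : IsMutationWitness w F G P) {l : StrongDual ℝ (RVec d)} {v f₀ : RVec d}
    (hl : ∀ y ∈ P, l y ≤ l v ∧ (l v ≤ l y → y = v)) (hf₀ : f₀ ∈ F) (hf₀max : IsMaxOn l F f₀)
    {k : ℤ} (hk : 0 ≤ k) (hvk : pairR w v = k) {e : RVec d}
    (he : e ∈ extremePoints ℝ (mutation w F G P)) (hle : l v ≤ l e - l f₀ * pairR w e) :
    pairR w e = k := by
  refine forall_mem_extremePoints_mutation
    (p := fun y => l v ≤ l y - l f₀ * pairR w y → pairR w y = k)
    (fun h hh y hy hle => ?_) (fun m y hy hle => ?_) e he hle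
  · -- `y + (-h)•f₀ ∈ P` has the same tilted value as `y`, so it would have to be `v`
    have hyh := pairR_of_mem_witness hF.2 hF.1.nonempty (hG h hh).2.2 hy
    have hp : y + (-h : ℝ) • f₀ ∈ P := heightSlice_subset hP.convex
      ((hG h hh).2.2 (add_mem_add hy (smul_mem_smul_set hf₀)))
    have hpv := (hl _ hp).2 (by rw [map_add, map_smul, smul_eq_mul]; rw [hyh] at hle; linarith)
    have := congrArg (pairR w) hpv
    rw [pairR_add_smul_of_mem hF.2 hf₀, hyh, hvk] at this
    exact absurd (show h = k by exact_mod_cast this) (by omega)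
  · obtain ⟨p, hp, _, ⟨f, hf, rfl⟩, rfl⟩ := hy
    have hpP := heightSlice_subset hP.convex hp
    rw [pairR_add_smul_of_mem hF.2 hf, map_add, map_smul, smul_eq_mul,
      pairR_of_mem_heightSlice hp] at hle
    have : (m : ℝ) * l f ≤ (m : ℝ) * l f₀ := mul_le_mul_of_nonneg_left (hf₀max hf) (by positivity)
    rw [pairR_add_smul_of_mem hF.2 hf, (hl p hpP).2 (by push_cast at hle; linarith), hvk]

lemma mem_of_mem_exposedPoints_of_pos (hP : IsLatticePolytope P) (hF : IsFactorShape w F)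
    (hG : IsMutationWitness w F G P) (hG' : IsMutationWitness (-w) F G' (mutation w F G P))
    {u : Fin d → ℤ} (hv : toR u ∈ exposedPoints ℝ P) {k : ℤ} (hk : 0 < k)
    (hvk : pairR w (toR u) = k) : toR u ∈ G' (-k) := by
  obtain ⟨hvP, l, hl⟩ := hv
  obtain ⟨f₀, hf₀, hf₀max⟩ := hF.1.isCompact.exists_isMaxOn hF.1.nonempty l.continuous.continuousOn
  set l' := l - l f₀ • pairL w
  have hl' : ∀ x, l' x = l x - l f₀ * pairR w x := by simp [l', pairL_apply]
  have hvQ : toR u + (k : ℝ) • f₀ ∈ mutation w F G P := heightSlice_add_smul_subset_mutation hk.le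
    (add_mem_add (mem_heightSlice_of_toR hvP hvk) (smul_mem_smul_set hf₀))
  obtain ⟨e, he, hemax⟩ := exists_mem_extremePoints_isMaxOn
    (isCompact_mutation hP.isCompact.isBounded hF.1 hG) ⟨_, hvQ⟩ l'
  have hle : l (toR u) ≤ l' e := by
    have := isMaxOn_iff.1 hemax _ hvQ
    rw [hl', pairR_add_smul_of_mem hF.2 hf₀, hvk, map_add, map_smul, smul_eq_mul] at this
    linarith
  rw [hl'] at hle
  have hek := pairR_eq_of_le_tilt hP hF hG hl hf₀ hf₀max hk.le hvk he hle
  obtain ⟨g, hg, _, ⟨f, hf, rfl⟩, rfl⟩ := (hG' (-k) (by omega)).2.1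
    ⟨he, by rw [pairR_neg_left, hek]; push_cast; ring⟩
  have hgP := subset_of_isMutationWitness_neg hP hF hG hG' (by omega) hg
  have : (k : ℝ) * l f ≤ k * l f₀ := mul_le_mul_of_nonneg_left (hf₀max hf) (by positivity)
  rw [hek, map_add, map_smul, smul_eq_mul] at hle
  push_cast at hle
  rwa [← (hl g hgP).2 (by linarith)]

lemma extremePoints_subset_mutation_neg (hP : IsLatticePolytope P) (hF : IsFactorShape w F)
    (hG : IsMutationWitness w F G P) (hG' : IsMutationWitness (-w) F G' (mutation w F G P)) :
    extremePoints ℝ P ⊆ mutation (-w) F G' (mutation w F G P) := by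
  obtain ⟨S, -, hPS⟩ := id hP
  intro v hv
  obtain ⟨u, -, rfl⟩ := extremePoints_convexHull_subset (hPS ▸ hv)
  have hvP := extremePoints_subset hv
  obtain ⟨k, hk⟩ : ∃ k : ℤ, pairR w (toR u) = k := ⟨_, pairR_toR w u⟩
  rcases lt_trichotomy k 0 with hneg | rfl | hpos
  · obtain ⟨g, hg, f, hf, hgf⟩ := (hG k hneg).2.1 ⟨hv, hk⟩
    refine heightSlice_add_smul_subset_mutation (k := -k) (by omega) ?_
    rw [heightSlice_neg_left, neg_neg, ← hgf]
    push_cast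
    exact add_mem_add (subset_heightSlice_mutation_of_neg hF hG hneg hg) hf
  · refine heightSlice_zero_subset_mutation hF.1.nonempty (mem_heightSlice_of_toR ?_ ?_)
    · exact heightSlice_zero_subset_mutation hF.1.nonempty (mem_heightSlice_of_toR hvP hk)
    · rw [pairR_neg_left, hk]; simp
  · have hexp := (S.finite_toSet.image toR).extremePoints_convexHull_subset_exposedPoints
      (hPS ▸ hv)
    rw [← hPS] at hexp
    exact subset_mutation_of_neg (by omega)
      (mem_of_mem_exposedPoints_of_pos hP hF hG hG' hexp hpos hk)

end Involution

end Lattice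

theorem mutation_involutive_general {d : ℕ} (P : Set (RVec d))
    (hP : IsLatticePolytope P) (w : Fin d → ℤ)
    (F : Set (RVec d)) (hF : IsFactorShape w F)
    (G : ℤ → Set (RVec d)) (hG : IsMutationWitness w F G P) :
    (∃ G', IsMutationWitness (-w) F G' (mutation w F G P)) ∧
      ∀ G', IsMutationWitness (-w) F G' (mutation w F G P) →
        mutation (-w) F G' (mutation w F G P) = P := by
  refine ⟨⟨fun h => heightSlice w (-h) P, isMutationWitness_neg hP hF hG⟩, fun G' hG' => ?_⟩
  have hR := isCompact_mutation (isCompact_mutation hP.isCompact.isBounded hF.1 hG).isBounded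
    hF.1 hG'
  refine (mutation_neg_subset hP hF hG hG').antisymm ?_
  exact (closure_convexHull_extremePoints hP.isCompact hP.convex).symm.subset.trans
    (closure_minimal (convexHull_min (extremePoints_subset_mutation_neg hP hF hG hG')
      convex_mutation) hR.isClosed)

/-- Combinatorial mutation is involutive: if `Q = mut_w(P,F)`, then `F` is also a
factor of `Q` with respect to `−w` and `P = mut_{(−w)}(Q,F)`. -/
theorem mutation_involutive {d : ℕ} (P : Set (RVec d))
    (hP : IsLatticePolytope P) (w : Fin d → ℤ) (hw : IsPrimitive w)
    (F : Set (RVec d)) (hF : IsFactorShape w F)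
    (G : ℤ → Set (RVec d)) (hG : IsMutationWitness w F G P) :
    (∃ G', IsMutationWitness (-w) F G' (mutation w F G P)) ∧
      ∀ G', IsMutationWitness (-w) F G' (mutation w F G P) →
        mutation (-w) F G' (mutation w F G P) = P :=
  mutation_involutive_general P hP w F hF G hG
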